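/- arXiv:1004.3620 — 2 statements merged into one kernel-verified Lean document; each statement's English description precedes it below -/
import Mathlib

section
/- Let a, c, d, e be positive integers, b ≥ 0, g = c+e, h = cd - be > 0, and t ∈ ℂ. The set D(t) = { x ∈ ℂˣ : (-1)^g (c^c e^e / g^g)(x^a - t)^g x^h = 1 } has exactly a·g + h elements for all t outside a finite set of exceptional values. -/
/-!
With `k = (-1)^g c^c e^e / g^g`, `D(t)` is the set of roots of `P_t = k (X^a - t)^g X^h - 1`,
a polynomial of degree `ag + h` none of whose roots is `0`. At a multiple root `x` the logarithmic
derivative `g a x^(a-1) / (x^a - t) + h / x` of `k (X^a - t)^g X^h` vanishes, i.e.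
`(ag + h) x^a = h t`; raising `k (x^a - t)^g x^h = 1` to the `a`-th power then gives
`k^a (-ag)^(ag) h^h t^(ag+h) = (ag+h)^(ag+h)`, which only finitely many `t` satisfy.
For all other `t` the polynomial `P_t` is separable and so has `ag + h` distinct roots.
-/

open Polynomial

namespace Polynomial

section CommRing

variable {R : Type*} [CommRing R]

noncomputable def binomialProd (k t : R) (a g h : ℕ) : R[X] :=
  C k * (X ^ a - C t) ^ g * X ^ h

@[simp]
lemma eval_binomialProd (k t x : R) (a g h : ℕ) :
    (binomialProd k t a g h).eval x = k * (x ^ a - t) ^ g * x ^ h := by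
  simp [binomialProd]

lemma X_mul_derivative_X_pow (n : ℕ) : X * derivative (X ^ n : R[X]) = C (n : R) * X ^ n := by
  rcases n with _ | n
  · simp
  · rw [derivative_X_pow, Nat.add_sub_cancel, mul_left_comm, ← pow_succ']

lemma X_mul_derivative_X_pow_sub_C_pow (t : R) (a g : ℕ) :
    X * (X ^ a - C t) * derivative ((X ^ a - C t) ^ g) =
      C ((g * a : ℕ) : R) * X ^ a * (X ^ a - C t) ^ g := by
  rcases g with _ | g
  · simp
  · have hXa := X_mul_derivative_X_pow (R := R) a
    rw [derivative_pow_succ, derivative_sub, derivative_C, sub_zero, Nat.cast_mul, C_mul,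
      Nat.cast_succ]
    linear_combination (C ((g : R) + 1) * (X ^ a - C t) ^ (g + 1)) * hXa

lemma X_mul_derivative_binomialProd (k t : R) (a g h : ℕ) :
    X * (X ^ a - C t) * derivative (binomialProd k t a g h) =
      binomialProd k t a g h * (C ((g * a : ℕ) : R) * X ^ a + C (h : R) * (X ^ a - C t)) := by
  have hX := X_mul_derivative_X_pow (R := R) h
  have hXa := X_mul_derivative_X_pow_sub_C_pow t a g
  simp only [binomialProd, derivative_mul, derivative_C, zero_mul, zero_add]
  linear_combination (C k * X ^ h) * hXa + (C k * (X ^ a - C t) ^ (g + 1)) * hX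

lemma binomialProd_critical_relation {k t x : R} {a g h : ℕ}
    (hx : (binomialProd k t a g h).eval x = 1)
    (hx' : (derivative (binomialProd k t a g h)).eval x = 0) :
    k ^ a * (-((a * g : ℕ) : R)) ^ (a * g) * (h : R) ^ h * t ^ (a * g + h) =
      ((a * g + h : ℕ) : R) ^ (a * g + h) := by
  set n : R := ((a * g + h : ℕ) : R)
  have hcrit : n * x ^ a = h * t := by
    have := congrArg (eval x) (X_mul_derivative_binomialProd k t a g h)
    simp only [eval_mul, eval_add, eval_sub, eval_X, eval_C, eval_pow, hx, hx'] at this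
    push_cast [n] at this ⊢
    linear_combination -this
  have hx_pow : (k * (x ^ a - t) ^ g * x ^ h) ^ a = 1 := by
    rw [← eval_binomialProd, hx, one_pow]
  have hx_sub : n * (x ^ a - t) = -((a * g : ℕ) : R) * t := by
    push_cast [n] at hcrit ⊢
    linear_combination hcrit
  calc k ^ a * (-((a * g : ℕ) : R)) ^ (a * g) * (h : R) ^ h * t ^ (a * g + h)
      = k ^ a * (n * (x ^ a - t)) ^ (a * g) * (n * x ^ a) ^ h := by
        rw [hcrit, hx_sub]
        ring
    _ = n ^ (a * g + h) * (k * (x ^ a - t) ^ g * x ^ h) ^ a := by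
        simp only [mul_pow, ← pow_mul]
        ring
    _ = n ^ (a * g + h) := by rw [hx_pow, mul_one]

end CommRing

lemma finite_setOf_mul_pow_eq {K : Type*} [Field K] (M N : K) {n : ℕ} (hn : n ≠ 0)
    (hN : N ≠ 0) :
    {t : K | M * t ^ n = N}.Finite := by
  have hp : C M * X ^ n - C N ≠ 0 := fun h0 => by
    simpa [zero_pow hn, hN] using congrArg (eval 0) h0
  refine (finite_setOfPred_isRoot hp).subset fun t ht => ?_
  simp_all [sub_eq_zero]

lemma separable_of_isRoot_not_isRoot_derivative {K : Type*} [Field K] [IsAlgClosed K] {p : K[X]}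
    (hp : ∀ x, p.IsRoot x → ¬ (derivative p).IsRoot x) : p.Separable :=
  (isCoprime_iff_aeval_ne_zero_of_isAlgClosed K K p _).2 fun x => by
    simpa [imp_iff_not_or] using hp x

lemma ncard_rootSet_eq_natDegree {F K : Type*} [Field F] [Field K] [Algebra F K] {p : F[X]}
    (hsep : p.Separable) (hsplit : (p.map (algebraMap F K)).Splits) :
    (p.rootSet K).ncard = p.natDegree := by
  rw [Set.ncard_eq_toFinset_card', Set.toFinset_card, card_rootSet_eq_natDegree hsep hsplit]

section Field

variable {K : Type*} [Field K]

lemma natDegree_binomialProd_sub_one {k t : K} {a : ℕ} (ha : 0 < a) (hk : k ≠ 0) (g h : ℕ) :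
    (binomialProd k t a g h - 1).natDegree = a * g + h := by
  rw [← C_1, natDegree_sub_C, binomialProd, natDegree_mul (by simp [hk, X_pow_sub_C_ne_zero ha])
    (by simp), natDegree_C_mul hk, natDegree_pow, natDegree_X_pow_sub_C, natDegree_X_pow, mul_comm]

lemma rootSet_binomialProd_sub_one (k t : K) (a g : ℕ) {h : ℕ} (hh : 0 < h) :
    (binomialProd k t a g h - 1).rootSet K = {x | x ≠ 0 ∧ k * (x ^ a - t) ^ g * x ^ h = 1} := by
  have hp : binomialProd k t a g h - 1 ≠ 0 := fun h0 => by
    simpa [zero_pow hh.ne'] using congrArg (eval 0) h0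
  ext x
  simp only [mem_rootSet_of_ne hp, coe_aeval_eq_eval, eval_sub, eval_binomialProd, eval_one,
    sub_eq_zero, Set.mem_ofPred_eq]
  refine ⟨fun hx => ⟨?_, hx⟩, And.right⟩
  rintro rfl
  simp [zero_pow hh.ne'] at hx

lemma finite_setOf_not_separable_binomialProd_sub_one [IsAlgClosed K] [CharZero K] (k : K)
    (a g h : ℕ) (hn : a * g + h ≠ 0) :
    {t : K | ¬ (binomialProd k t a g h - 1).Separable}.Finite := by
  refine (finite_setOf_mul_pow_eq (k ^ a * (-((a * g : ℕ) : K)) ^ (a * g) * (h : K) ^ h)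
    (((a * g + h : ℕ) : K) ^ (a * g + h)) hn
    (pow_ne_zero _ (Nat.cast_ne_zero.2 hn))).subset fun t hsep => by_contra fun hrel =>
      hsep <| separable_of_isRoot_not_isRoot_derivative fun x hx hx' => hrel ?_
  simp only [IsRoot, eval_sub, eval_one, sub_eq_zero, derivative_sub, derivative_one,
    sub_zero] at hx hx'
  exact binomialProd_critical_relation hx hx'

end Field

end Polynomial

theorem stmt_7_general (a c e h : ℕ) (ha : 0 < a) (hh : 0 < h) :
    ∃ S : Set ℂ, S.Finite ∧ ∀ t : ℂ, t ∉ S →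
      {x : ℂ | x ≠ 0 ∧ (-1) ^ (c + e) * ((c : ℂ) ^ c * (e : ℂ) ^ e / ((c : ℂ) + e) ^ (c + e))
          * (x ^ a - t) ^ (c + e) * x ^ h = 1}.ncard = a * (c + e) + h := by
  set k : ℂ := (-1) ^ (c + e) * ((c : ℂ) ^ c * (e : ℂ) ^ e / ((c : ℂ) + e) ^ (c + e))
  have hself (n : ℕ) : (n : ℂ) ^ n ≠ 0 := by exact_mod_cast Nat.pow_self_pos.ne'
  have hk : k ≠ 0 := by
    have hg := hself (c + e)
    push_cast at hg
    simp [k, hself, hg]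
  refine ⟨_, finite_setOf_not_separable_binomialProd_sub_one k a (c + e) h
    (by positivity), fun t ht => ?_⟩
  rw [← rootSet_binomialProd_sub_one k t a (c + e) hh, ncard_rootSet_eq_natDegree (not_not.1 ht)
    (IsAlgClosed.splits _), natDegree_binomialProd_sub_one ha hk]

/-- For all `t` outside a finite exceptional set, the set
`D(t) = { x ≠ 0 : (-1)^g (c^c e^e / g^g)(x^a - t)^g x^h = 1 }`, with
`g = c + e` and `h = cd - be > 0`, has exactly `ag + h` elements. -/
theorem stmt_7 (a b c d e h : ℕ) (ha : 0 < a) (hc : 0 < c) (hd : 0 < d)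
    (he : 0 < e) (hh : 0 < h) (hcd : c * d = b * e + h) :
    ∃ S : Set ℂ, S.Finite ∧ ∀ t : ℂ, t ∉ S →
      {x : ℂ | x ≠ 0 ∧ (-1) ^ (c + e) * ((c : ℂ) ^ c * (e : ℂ) ^ e / ((c : ℂ) + e) ^ (c + e))
          * (x ^ a - t) ^ (c + e) * x ^ h = 1}.ncard = a * (c + e) + h :=
  stmt_7_general a c e h ha hh
end

section
/- With a, g, h positive integers, the polynomial P_t(x) = (-1)^g c^c e^e (x^a - t)^g x^h - g^g (g = c+e, h = cd - be) has a repeated root x only if x^a = (h/(ag+h)) t and t^{(ag+h)/a} equals (1/(c^c e^e)) (1 + h/a)^g (1 + ag/h)^{h/a} up to a root of unity; in particular, if x is a repeated root of P_t then a x^a (g + h) relation holds: x^a = h t/(ag + h). -/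
/-!
Writing `P(z) = K (z^a - t)^g z^h - M`, one has
`x (x^a - t) P'(x) = K (x^a - t)^g x^h (g a x^a + h (x^a - t))`
(the factor `x^a - t` keeps the truncated exponent `g - 1` out of the identity, so it holds for `g = 0`).
Away from `x = 0` and `x^a = t` the prefactor is nonzero (note `c^c ≠ 0` even for `c = 0`),
so a critical point satisfies `g a x^a + h (x^a - t) = 0`, which is linear in `x^a`.
-/

lemma natCast_mul_pow_pred_mul {R : Type*} [CommSemiring R] (n : ℕ) (x : R) :
    (n : R) * x ^ (n - 1) * x = n * x ^ n := by
  rcases n with _ | n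
  · simp
  · rw [mul_assoc, Nat.add_sub_cancel, ← pow_succ]

section

variable {𝕜 : Type*} [NontriviallyNormedField 𝕜]

lemma mul_deriv_mul_pow_sub_mul_pow (K t M x : 𝕜) (a g h : ℕ) :
    x * (x ^ a - t) * deriv (fun z => K * (z ^ a - t) ^ g * z ^ h - M) x
      = K * (x ^ a - t) ^ g * x ^ h * (g * a * x ^ a + h * (x ^ a - t)) := by
  have hderiv : HasDerivAt (fun z => K * (z ^ a - t) ^ g * z ^ h - M)
      (K * (g * (x ^ a - t) ^ (g - 1) * (a * x ^ (a - 1))) * x ^ h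
        + K * (x ^ a - t) ^ g * (h * x ^ (h - 1))) x :=
    ((((hasDerivAt_pow a x).sub_const t).pow g).const_mul K |>.mul
      (hasDerivAt_pow h x)).sub_const M
  rw [hderiv.deriv]
  linear_combination
    K * x ^ h * (a * x ^ (a - 1) * x) * natCast_mul_pow_pred_mul g (x ^ a - t)
      + K * x ^ h * g * (x ^ a - t) ^ g * natCast_mul_pow_pred_mul a x
      + K * (x ^ a - t) ^ (g + 1) * natCast_mul_pow_pred_mul h x

lemma linear_relation_of_deriv_eq_zero {K t M x : 𝕜} {a g h : ℕ} (hK : K ≠ 0) (hx : x ≠ 0)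
    (hxt : x ^ a ≠ t) (hcrit : deriv (fun z => K * (z ^ a - t) ^ g * z ^ h - M) x = 0) :
    g * a * x ^ a + h * (x ^ a - t) = 0 := by
  have hprod := mul_deriv_mul_pow_sub_mul_pow K t M x a g h
  rw [hcrit, mul_zero, eq_comm] at hprod
  have hS : x ^ a - t ≠ 0 := sub_ne_zero.mpr hxt
  simpa [hK, hS, hx] using hprod

end

theorem stmt_8_general (a c e h : ℕ) (hh : 0 < h) (t x : ℂ)
    (hx : x ≠ 0) (hxt : x ^ a ≠ t)
    (hP' : deriv (fun z : ℂ =>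
            (-1) ^ (c + e) * (c : ℂ) ^ c * (e : ℂ) ^ e * (z ^ a - t) ^ (c + e) * z ^ h
              - ((c : ℂ) + e) ^ (c + e)) x = 0) :
    x ^ a = (h : ℂ) * t / ((a : ℂ) * ((c : ℂ) + e) + h) := by
  have hK : (-1) ^ (c + e) * (c : ℂ) ^ c * (e : ℂ) ^ e ≠ 0 := by
    have (n : ℕ) : (n : ℂ) ^ n ≠ 0 := by rcases n with _ | n <;> simp [Nat.cast_add_one_ne_zero]
    simp [this]
  have hrel := linear_relation_of_deriv_eq_zero hK hx hxt hP'
  have hden : (a : ℂ) * ((c : ℂ) + e) + h ≠ 0 := by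
    exact_mod_cast (show a * (c + e) + h ≠ 0 by positivity)
  rw [eq_div_iff hden]
  push_cast at hrel
  linear_combination hrel

/-- A repeated root of `P_t(x) = (-1)^g c^c e^e (x^a - t)^g x^h - g^g`
(i.e. a common zero of `P_t` and its derivative) with `x ≠ 0` and `x^a ≠ t`
satisfies `x^a = h t / (ag + h)`, where `g = c+e`, `h = cd - be > 0`. -/
theorem stmt_8 (a b c d e h : ℕ) (ha : 0 < a) (hc : 0 < c) (hd : 0 < d)
    (he : 0 < e) (hh : 0 < h) (hcd : c * d = b * e + h) (t x : ℂ)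
    (hx : x ≠ 0) (hxt : x ^ a ≠ t)
    (hP : (-1) ^ (c + e) * (c : ℂ) ^ c * (e : ℂ) ^ e * (x ^ a - t) ^ (c + e) * x ^ h
            - ((c : ℂ) + e) ^ (c + e) = 0)
    (hP' : deriv (fun z : ℂ =>
            (-1) ^ (c + e) * (c : ℂ) ^ c * (e : ℂ) ^ e * (z ^ a - t) ^ (c + e) * z ^ h
              - ((c : ℂ) + e) ^ (c + e)) x = 0) :
    x ^ a = (h : ℂ) * t / ((a : ℂ) * ((c : ℂ) + e) + h) :=
  stmt_8_general a c e h hh t x hx hxt hP'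
end
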